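/- Let A ∈ ℝ^{m×n} have rank n, R_s ∈ ℝ^{n×n} invertible, E_s, E_A with ‖E_s‖·‖R_s⁻¹‖ < 1, ε_A = ‖E_A‖/‖A‖, A_p = A R_s⁻¹, A_1 = (A+E_A)(R_s+E_s)⁻¹, A_2 = A + E_A. Let x* = A† b and suppose x̂ ≠ 0 satisfies A_1ᵀ A_2 x̂ = A_1ᵀ b (in particular A_pᵀ A is assumed invertible). Then ‖x̂ − x*‖/‖x̂‖ ≤ κ(A_pᵀA)·ν·ε_A·( κ(R_s)·‖A x̂ − b‖/(‖A‖·‖x̂‖) + 1 + κ(A)·ε_A ), where ν = ‖A_p‖·‖A‖/‖A_pᵀA‖. -/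

import Mathlib

open Matrix

/-- Spectral (operator 2-) norm of a real matrix. -/
noncomputable def spNorm {m n : ℕ} (M : Matrix (Fin m) (Fin n) ℝ) : ℝ :=
  ‖LinearMap.toContinuousLinearMap (Matrix.toEuclideanLin M)‖

/-- Euclidean 2-norm of a real vector. -/
noncomputable def vNorm {n : ℕ} (x : Fin n → ℝ) : ℝ :=
  ‖(WithLp.equiv 2 (Fin n → ℝ)).symm x‖

/-- Moore–Penrose left inverse of a full column rank matrix. -/
noncomputable def pinv {m n : ℕ} (A : Matrix (Fin m) (Fin n) ℝ) : Matrix (Fin n) (Fin m) ℝ :=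
  (Aᵀ * A)⁻¹ * Aᵀ

/-- Condition number with respect to left inversion. -/
noncomputable def kappa {m n : ℕ} (A : Matrix (Fin m) (Fin n) ℝ) : ℝ :=
  spNorm A * spNorm (pinv A)

open scoped Matrix.Norms.L2Operator

/-!
Since `A₁ = A₂ (R_s + E_s)⁻¹` with `R_s + E_s` invertible (Neumann series), `x̂` solves the exact
normal equations `A₂ᵀ A₂ x̂ = A₂ᵀ b`. Subtracting `Aᵀ A x* = Aᵀ b` and multiplying by `R_s⁻ᵀ` gives
`(A_pᵀ A)(x̂ - x*) = -(A_pᵀ E_A x̂ + R_s⁻ᵀ E_Aᵀ (A₂ x̂ - b))`, so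
`‖x̂ - x*‖ ≤ ‖(A_pᵀ A)⁻¹‖ ‖E_A‖ (‖A_p‖ ‖x̂‖ + ‖R_s⁻¹‖ (‖A x̂ - b‖ + ‖E_A‖ ‖x̂‖))`.
The factor `‖R_s⁻¹‖` is traded for `‖A_p‖` twice: `‖A‖ ≤ ‖A_p‖ ‖R_s‖` because `A = A_p R_s`, and
`‖R_s⁻¹‖ ≤ ‖A†‖ ‖A_p‖` because `R_s⁻¹ = A† A_p`.
-/

section Algebra

variable {R : Type*} [CommRing R] {m n : Type*} [Fintype m] [Fintype n]

theorem transpose_mul_mulVec_eq_of_right_precond [DecidableEq n] {S : Matrix n n R}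
    (hS : IsUnit S.det) (B : Matrix m n R) {x : n → R} {b : m → R}
    (h : ((B * S⁻¹)ᵀ * B) *ᵥ x = (B * S⁻¹)ᵀ *ᵥ b) : (Bᵀ * B) *ᵥ x = Bᵀ *ᵥ b := by
  have hST : Sᵀ * S⁻¹ᵀ = 1 := by
    rw [← transpose_mul, nonsing_inv_mul _ hS, transpose_one]
  have h' := congrArg (Sᵀ *ᵥ ·) h
  simp only [transpose_mul, mulVec_mulVec, ← Matrix.mul_assoc, hST, Matrix.one_mul] at h'
  exact h'

theorem transpose_mul_mulVec_sub_eq_of_perturbed {A E : Matrix m n R} {x y : n → R} {b : m → R}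
    (hy : (Aᵀ * A) *ᵥ y = Aᵀ *ᵥ b)
    (hx : ((A + E)ᵀ * (A + E)) *ᵥ x = (A + E)ᵀ *ᵥ b) :
    (Aᵀ * A) *ᵥ (x - y) = -(Aᵀ *ᵥ (E *ᵥ x) + Eᵀ *ᵥ ((A + E) *ᵥ x - b)) := by
  simp only [transpose_add, Matrix.add_mul, add_mulVec, mulVec_add, ← mulVec_mulVec] at hx
  simp only [mulVec_sub, mulVec_add, add_mulVec, ← mulVec_mulVec, hy]
  linear_combination (norm := module) hx

theorem mulVec_sub_eq_of_perturbed_half_precond {A E : Matrix m n R} (S : Matrix n n R)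
    {x y : n → R} {b : m → R} (hy : (Aᵀ * A) *ᵥ y = Aᵀ *ᵥ b)
    (hx : ((A + E)ᵀ * (A + E)) *ᵥ x = (A + E)ᵀ *ᵥ b) :
    ((A * S)ᵀ * A) *ᵥ (x - y) = -((A * S)ᵀ *ᵥ (E *ᵥ x) + Sᵀ *ᵥ (Eᵀ *ᵥ ((A + E) *ᵥ x - b))) := by
  rw [transpose_mul, Matrix.mul_assoc, ← mulVec_mulVec,
    transpose_mul_mulVec_sub_eq_of_perturbed hy hx, mulVec_neg, mulVec_add, mulVec_mulVec]

theorem isUnit_det_transpose_mul_self_of_precond [DecidableEq n] {A : Matrix m n R} {S : Matrix n n R}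
    (h : IsUnit ((A * S)ᵀ * A).det) : IsUnit (Aᵀ * A).det := by
  rw [transpose_mul, Matrix.mul_assoc, det_mul] at h
  exact isUnit_of_mul_isUnit_right h

end Algebra

section PseudoInverse

variable {m n : ℕ}

theorem pinv_mul_self {A : Matrix (Fin m) (Fin n) ℝ} (hA : IsUnit (Aᵀ * A).det) :
    pinv A * A = 1 := by
  rw [pinv, Matrix.mul_assoc, nonsing_inv_mul _ hA]

theorem transpose_mul_mulVec_pinv_mulVec {A : Matrix (Fin m) (Fin n) ℝ}
    (hA : IsUnit (Aᵀ * A).det) (b : Fin m → ℝ) : (Aᵀ * A) *ᵥ (pinv A *ᵥ b) = Aᵀ *ᵥ b := by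
  rw [pinv, mulVec_mulVec, ← Matrix.mul_assoc, mul_nonsing_inv _ hA, Matrix.one_mul]

theorem pinv_eq_inv {M : Matrix (Fin n) (Fin n) ℝ} (hM : IsUnit M.det) : pinv M = M⁻¹ := by
  have hMT : IsUnit Mᵀ.det := by rwa [det_transpose]
  rw [pinv, Matrix.mul_inv_rev, nonsing_inv_mul_cancel_right _ _ hMT]

theorem kappa_eq_of_isUnit_det {M : Matrix (Fin n) (Fin n) ℝ} (hM : IsUnit M.det) :
    kappa M = ‖M‖ * ‖M⁻¹‖ := by
  rw [kappa, pinv_eq_inv hM]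
  rfl

end PseudoInverse

section Norms

variable {m n : ℕ}

theorem spNorm_eq_norm (M : Matrix (Fin m) (Fin n) ℝ) : spNorm M = ‖M‖ := rfl

theorem l2_opNorm_transpose (M : Matrix (Fin m) (Fin n) ℝ) : ‖Mᵀ‖ = ‖M‖ := by
  rw [← conjTranspose_eq_transpose_of_trivial, l2_opNorm_conjTranspose]

theorem vNorm_nonneg (x : Fin n → ℝ) : 0 ≤ vNorm x := norm_nonneg _

theorem vNorm_pos {x : Fin n → ℝ} (hx : x ≠ 0) : 0 < vNorm x :=
  norm_pos_iff.mpr fun h => hx (by simpa using congrArg (WithLp.equiv 2 (Fin n → ℝ)) h)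

theorem vNorm_add_le (x y : Fin n → ℝ) : vNorm (x + y) ≤ vNorm x + vNorm y :=
  norm_add_le (WithLp.toLp 2 x) (WithLp.toLp 2 y)

theorem vNorm_neg (x : Fin n → ℝ) : vNorm (-x) = vNorm x :=
  norm_neg (WithLp.toLp 2 x)

theorem vNorm_mulVec_le (M : Matrix (Fin m) (Fin n) ℝ) (x : Fin n → ℝ) :
    vNorm (M *ᵥ x) ≤ ‖M‖ * vNorm x :=
  M.l2_opNorm_mulVec (WithLp.toLp 2 x)

theorem vNorm_mulVec_mulVec_le {l : ℕ} (M : Matrix (Fin m) (Fin n) ℝ)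
    (N : Matrix (Fin n) (Fin l) ℝ) (x : Fin l → ℝ) :
    vNorm (M *ᵥ (N *ᵥ x)) ≤ ‖M‖ * (‖N‖ * vNorm x) :=
  (vNorm_mulVec_le M _).trans (by gcongr; exact vNorm_mulVec_le N x)

theorem isUnit_det_add_of_norm_mul_lt_one {R E : Matrix (Fin n) (Fin n) ℝ} (hR : IsUnit R.det)
    (h : ‖E‖ * ‖R⁻¹‖ < 1) : IsUnit (R + E).det := by
  have hsmall : ‖-(E * R⁻¹)‖ < 1 := by
    rw [norm_neg]; exact (l2_opNorm_mul E R⁻¹).trans_lt h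
  have hfac : R + E = (1 - -(E * R⁻¹)) * R := by
    rw [sub_neg_eq_add, Matrix.add_mul, Matrix.one_mul, nonsing_inv_mul_cancel_right _ _ hR,
      add_comm]
  rw [hfac, det_mul]
  exact ((isUnit_one_sub_of_norm_lt_one hsmall).map detMonoidHom).mul hR

theorem norm_le_norm_mul_inv_mul_norm {R : Matrix (Fin n) (Fin n) ℝ} (hR : IsUnit R.det)
    (A : Matrix (Fin m) (Fin n) ℝ) : ‖A‖ ≤ ‖A * R⁻¹‖ * ‖R‖ := by
  calc ‖A‖ = ‖A * R⁻¹ * R‖ := by rw [nonsing_inv_mul_cancel_right _ _ hR]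
    _ ≤ ‖A * R⁻¹‖ * ‖R‖ := l2_opNorm_mul _ _

theorem norm_inv_le_norm_pinv_mul {A : Matrix (Fin m) (Fin n) ℝ} (hA : IsUnit (Aᵀ * A).det)
    (R : Matrix (Fin n) (Fin n) ℝ) : ‖R⁻¹‖ ≤ ‖pinv A‖ * ‖A * R⁻¹‖ := by
  conv_lhs => rw [← Matrix.one_mul R⁻¹, ← pinv_mul_self hA, Matrix.mul_assoc]
  exact l2_opNorm_mul _ _

theorem vNorm_le_of_mulVec_eq {M : Matrix (Fin n) (Fin n) ℝ} (hM : IsUnit M.det) {l : ℕ}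
    {P E : Matrix (Fin l) (Fin n) ℝ} {S : Matrix (Fin n) (Fin n) ℝ} {d x : Fin n → ℝ}
    {r : Fin l → ℝ} (h : M *ᵥ d = -(Pᵀ *ᵥ (E *ᵥ x) + Sᵀ *ᵥ (Eᵀ *ᵥ r))) :
    vNorm d ≤ ‖M⁻¹‖ * ‖E‖ * (‖P‖ * vNorm x + ‖S‖ * vNorm r) := by
  rw [← one_mulVec d, ← nonsing_inv_mul _ hM, ← mulVec_mulVec, h]
  calc vNorm (M⁻¹ *ᵥ -(Pᵀ *ᵥ (E *ᵥ x) + Sᵀ *ᵥ (Eᵀ *ᵥ r)))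
      ≤ ‖M⁻¹‖ * (vNorm (Pᵀ *ᵥ (E *ᵥ x)) + vNorm (Sᵀ *ᵥ (Eᵀ *ᵥ r))) := by
        grw [vNorm_mulVec_le, vNorm_neg, vNorm_add_le]
    _ ≤ ‖M⁻¹‖ * (‖Pᵀ‖ * (‖E‖ * vNorm x) + ‖Sᵀ‖ * (‖Eᵀ‖ * vNorm r)) := by
        grw [vNorm_mulVec_mulVec_le, vNorm_mulVec_mulVec_le]
    _ = ‖M⁻¹‖ * ‖E‖ * (‖P‖ * vNorm x + ‖S‖ * vNorm r) := by
        simp only [l2_opNorm_transpose]; ring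

end Norms

theorem vNorm_sub_pinv_mulVec_le {m n : ℕ} {A E : Matrix (Fin m) (Fin n) ℝ}
    {R : Matrix (Fin n) (Fin n) ℝ} (hM : IsUnit ((A * R⁻¹)ᵀ * A).det) {x : Fin n → ℝ}
    {b : Fin m → ℝ} (hx : ((A + E)ᵀ * (A + E)) *ᵥ x = (A + E)ᵀ *ᵥ b) :
    vNorm (x - pinv A *ᵥ b) ≤ ‖((A * R⁻¹)ᵀ * A)⁻¹‖ * ‖E‖ *
      (‖A * R⁻¹‖ * vNorm x + ‖R⁻¹‖ * (vNorm (A *ᵥ x - b) + ‖E‖ * vNorm x)) := by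
  have hA := isUnit_det_transpose_mul_self_of_precond hM
  have hr : vNorm ((A + E) *ᵥ x - b) ≤ vNorm (A *ᵥ x - b) + ‖E‖ * vNorm x := by
    grw [show (A + E) *ᵥ x - b = (A *ᵥ x - b) + E *ᵥ x by rw [add_mulVec]; abel,
      vNorm_add_le, vNorm_mulVec_le]
  grw [vNorm_le_of_mulVec_eq hM <| mulVec_sub_eq_of_perturbed_half_precond R⁻¹
    (transpose_mul_mulVec_pinv_mulVec hA b) hx, hr]
theorem stmt_7_general {m n : ℕ} (A EA : Matrix (Fin m) (Fin n) ℝ) (Rs Es : Matrix (Fin n) (Fin n) ℝ)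
    (b : Fin m → ℝ) (xh : Fin n → ℝ)
    (hR : IsUnit Rs.det) (hEs : spNorm Es * spNorm Rs⁻¹ < 1)
    (εA : ℝ) (hεA : εA = spNorm EA / spNorm A)
    (Ap : Matrix (Fin m) (Fin n) ℝ) (hAp : Ap = A * Rs⁻¹)
    (A₁ : Matrix (Fin m) (Fin n) ℝ) (hA₁ : A₁ = (A + EA) * (Rs + Es)⁻¹)
    (A₂ : Matrix (Fin m) (Fin n) ℝ) (hA₂ : A₂ = A + EA)
    (hInv : IsUnit (Apᵀ * A).det)
    (xs : Fin n → ℝ) (hxs : xs = pinv A *ᵥ b)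
    (hx : (A₁ᵀ * A₂) *ᵥ xh = A₁ᵀ *ᵥ b)
    (hxne : xh ≠ 0)
    (ν : ℝ) (hν : ν = spNorm Ap * spNorm A / spNorm (Apᵀ * A)) :
    vNorm (xh - xs) / vNorm xh ≤
      kappa (Apᵀ * A) * ν * εA *
        (kappa Rs * (vNorm (A *ᵥ xh - b) / (spNorm A * vNorm xh))
          + 1 + kappa A * εA) := by
  subst hεA hAp hA₁ hA₂ hxs hν
  have : NeZero n := ⟨by rintro rfl; exact hxne (Subsingleton.elim _ _)⟩
  have hAA := isUnit_det_transpose_mul_self_of_precond hInv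
  have hd := vNorm_sub_pinv_mulVec_le hInv <|
    transpose_mul_mulVec_eq_of_right_precond (isUnit_det_add_of_norm_mul_lt_one hR hEs) _ hx
  have hxpos := vNorm_pos hxne
  have hApos : 0 < ‖A‖ := norm_pos_iff.mpr fun h => by simp [h] at hAA
  have hMpos : 0 < ‖(A * Rs⁻¹)ᵀ * A‖ := norm_pos_iff.mpr fun h => by rw [h] at hInv; simp at hInv
  have hA_le : 1 ≤ ‖A * Rs⁻¹‖ * ‖Rs‖ / ‖A‖ :=
    (one_le_div hApos).mpr (norm_le_norm_mul_inv_mul_norm hR A)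
  have hRinv_le := norm_inv_le_norm_pinv_mul hAA Rs
  have hres := vNorm_nonneg (A *ᵥ xh - b)
  rw [kappa_eq_of_isUnit_det hInv, kappa_eq_of_isUnit_det hR, kappa]
  simp only [spNorm_eq_norm]
  calc _ ≤ ‖((A * Rs⁻¹)ᵀ * A)⁻¹‖ * ‖EA‖ *
        (‖A * Rs⁻¹‖ * vNorm xh + ‖Rs⁻¹‖ * (vNorm (A *ᵥ xh - b) + ‖EA‖ * vNorm xh)) / vNorm xh := by
        grw [hd]
    _ = ‖((A * Rs⁻¹)ᵀ * A)⁻¹‖ * ‖EA‖ * (‖A * Rs⁻¹‖ +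
        ‖Rs⁻¹‖ * (vNorm (A *ᵥ xh - b) / vNorm xh) * 1 + ‖Rs⁻¹‖ * ‖EA‖) := by
        field_simp; ring
    _ ≤ ‖((A * Rs⁻¹)ᵀ * A)⁻¹‖ * ‖EA‖ * (‖A * Rs⁻¹‖ +
        ‖Rs⁻¹‖ * (vNorm (A *ᵥ xh - b) / vNorm xh) * (‖A * Rs⁻¹‖ * ‖Rs‖ / ‖A‖) +
          ‖pinv A‖ * ‖A * Rs⁻¹‖ * ‖EA‖) := by
        gcongr
    _ = _ := by field_simp; ring

theorem stmt_7 {m n : ℕ} (A EA : Matrix (Fin m) (Fin n) ℝ) (Rs Es : Matrix (Fin n) (Fin n) ℝ)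
    (b : Fin m → ℝ) (xh : Fin n → ℝ)
    (hA : A.rank = n) (hR : IsUnit Rs.det) (hEs : spNorm Es * spNorm Rs⁻¹ < 1)
    (εA : ℝ) (hεA : εA = spNorm EA / spNorm A)
    (Ap : Matrix (Fin m) (Fin n) ℝ) (hAp : Ap = A * Rs⁻¹)
    (A₁ : Matrix (Fin m) (Fin n) ℝ) (hA₁ : A₁ = (A + EA) * (Rs + Es)⁻¹)
    (A₂ : Matrix (Fin m) (Fin n) ℝ) (hA₂ : A₂ = A + EA)
    (hInv : IsUnit (Apᵀ * A).det)
    (xs : Fin n → ℝ) (hxs : xs = pinv A *ᵥ b)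
    (hx : (A₁ᵀ * A₂) *ᵥ xh = A₁ᵀ *ᵥ b)
    (hxne : xh ≠ 0)
    (ν : ℝ) (hν : ν = spNorm Ap * spNorm A / spNorm (Apᵀ * A)) :
    vNorm (xh - xs) / vNorm xh ≤
      kappa (Apᵀ * A) * ν * εA *
        (kappa Rs * (vNorm (A *ᵥ xh - b) / (spNorm A * vNorm xh))
          + 1 + kappa A * εA) :=
  stmt_7_general A EA Rs Es b xh hR hEs εA hεA Ap hAp A₁ hA₁ A₂ hA₂ hInv xs hxs hx hxne ν hν
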